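/- arXiv:2310.06990 — 7 statements merged into one kernel-verified Lean document; each statement's English description precedes it below -/
import Mathlib

section
/- A linear map $\Lambda: H\to L$ is a nonabelian embedding tensor on a 3-Lie algebra $L$ with respect to a coherent action $(H,[-,-,-]_H;\rho^\dag)$ if and only if the graph $Gr(\Lambda)=\{\Lambda h + h : h\in H\}$ is a subalgebra of the nonabelian hemisemidirect product 3-Leibniz algebra $L\ltimes_\rho H$. -/
/-- A map of three arguments that is linear in each slot. -/
def Trilinear (K : Type*) [Field K] {V₁ V₂ V₃ W : Type*}
    [AddCommGroup V₁] [Module K V₁] [AddCommGroup V₂] [Module K V₂]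
    [AddCommGroup V₃] [Module K V₃] [AddCommGroup W] [Module K W]
    (f : V₁ → V₂ → V₃ → W) : Prop :=
  (∀ x y b c, f (x + y) b c = f x b c + f y b c) ∧
  (∀ (r : K) x b c, f (r • x) b c = r • f x b c) ∧
  (∀ a x y c, f a (x + y) c = f a x c + f a y c) ∧
  (∀ (r : K) a x c, f a (r • x) c = r • f a x c) ∧
  (∀ a b x y, f a b (x + y) = f a b x + f a b y) ∧
  (∀ (r : K) a b x, f a b (r • x) = r • f a b x)

/-- A map of two arguments that is linear in each slot. -/
def Bilinear (K : Type*) [Field K] {V₁ V₂ W : Type*}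
    [AddCommGroup V₁] [Module K V₁] [AddCommGroup V₂] [Module K V₂]
    [AddCommGroup W] [Module K W] (f : V₁ → V₂ → W) : Prop :=
  (∀ x y b, f (x + y) b = f x b + f y b) ∧
  (∀ (r : K) x b, f (r • x) b = r • f x b) ∧
  (∀ a x y, f a (x + y) = f a x + f a y) ∧
  (∀ (r : K) a x, f a (r • x) = r • f a x)

/-- The fundamental identity for a ternary bracket. -/
def FundId {V : Type*} [AddCommGroup V] (f : V → V → V → V) : Prop :=
  ∀ a b c d e, f a b (f c d e) = f (f a b c) d e + f c (f a b d) e + f c d (f a b e)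

/-- Skew-symmetry of a ternary bracket. -/
def Skew {V : Type*} [AddCommGroup V] (f : V → V → V → V) : Prop :=
  (∀ a b c, f a b c = - f b a c) ∧ (∀ a b c, f a b c = - f a c b)

/-- A 3-Lie algebra structure: trilinear, skew-symmetric bracket
satisfying the fundamental identity. -/
def Is3Lie (K : Type*) [Field K] {V : Type*} [AddCommGroup V] [Module K V]
    (f : V → V → V → V) : Prop :=
  Trilinear K f ∧ Skew f ∧ FundId f

/-- A 3-Leibniz algebra structure: trilinear bracket satisfying
the fundamental identity (no skew-symmetry required). -/
def Is3Leibniz (K : Type*) [Field K] {V : Type*} [AddCommGroup V] [Module K V]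
    (f : V → V → V → V) : Prop :=
  Trilinear K f ∧ FundId f

/-- A representation of a 3-Lie algebra `(L, brL)` on a vector space `H`,
given by a (skew-symmetric in the first two slots) map `ρ : L → L → H → H`. -/
def Is3LieRep (K : Type*) [Field K] {L H : Type*} [AddCommGroup L] [Module K L]
    [AddCommGroup H] [Module K H] (brL : L → L → L → L) (ρ : L → L → H → H) : Prop :=
  Trilinear K ρ ∧ (∀ a b h, ρ a b h = - ρ b a h) ∧
  (∀ a b c d h, ρ (brL a b c) d h = ρ b c (ρ a d h) + ρ c a (ρ b d h) + ρ a b (ρ c d h)) ∧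
  (∀ a b c d h, ρ a b (ρ c d h) = ρ c d (ρ a b h) + ρ (brL a b c) d h + ρ c (brL a b d) h)

/-- A coherent action of the 3-Lie algebra `(L, brL)` on the 3-Lie algebra `(H, brH)`. -/
def IsCoherentAction (K : Type*) [Field K] {L H : Type*} [AddCommGroup L] [Module K L]
    [AddCommGroup H] [Module K H] (brL : L → L → L → L) (brH : H → H → H → H)
    (ρ : L → L → H → H) : Prop :=
  Is3LieRep K brL ρ ∧
  (∀ a b h₁ h₂ h₃, ρ a b (brH h₁ h₂ h₃)
      = brH (ρ a b h₁) h₂ h₃ + brH h₁ (ρ a b h₂) h₃ + brH h₁ h₂ (ρ a b h₃)) ∧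
  (∀ a b h₁ h₂ h₃, brH (ρ a b h₁) h₂ h₃ = 0)

/-- A nonabelian embedding tensor on `(L, brL)` with respect to the coherent
action `ρ` of `L` on `(H, brH)`. -/
def IsNAEmbeddingTensor (K : Type*) [Field K] {L H : Type*} [AddCommGroup L] [Module K L]
    [AddCommGroup H] [Module K H] (brL : L → L → L → L) (brH : H → H → H → H)
    (ρ : L → L → H → H) (Λ : H →ₗ[K] L) : Prop :=
  ∀ h₁ h₂ h₃, brL (Λ h₁) (Λ h₂) (Λ h₃) = Λ (ρ (Λ h₁) (Λ h₂) h₃ + brH h₁ h₂ h₃)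

/-- A 3-Leibniz-Lie algebra: a 3-Lie algebra `(H, brH)` together with a
trilinear product `tr` satisfying the compatibility conditions. -/
def Is3LeibnizLie (K : Type*) [Field K] {H : Type*} [AddCommGroup H] [Module K H]
    (brH : H → H → H → H) (tr : H → H → H → H) : Prop :=
  Is3Lie K brH ∧ Trilinear K tr ∧
  (∀ h₁ h₂ h₃ h₄ h₅, tr h₁ h₂ (tr h₃ h₄ h₅)
      = tr (tr h₁ h₂ h₃) h₄ h₅ + tr h₃ (tr h₁ h₂ h₄) h₅ + tr h₃ h₄ (tr h₁ h₂ h₅)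
        + tr (brH h₁ h₂ h₃) h₄ h₅ + tr h₃ (brH h₁ h₂ h₄) h₅) ∧
  (∀ h₁ h₂ h₃ h₄ h₅, tr h₁ h₂ (brH h₃ h₄ h₅) = 0) ∧
  (∀ h₁ h₂ h₃ h₄ h₅, brH (tr h₁ h₂ h₃) h₄ h₅ = 0)

/-- A representation of a 3-Leibniz algebra `(A, br)` on `V` via actions `l`, `m`, `r`. -/
def Is3LeibnizRep (K : Type*) [Field K] {A V : Type*} [AddCommGroup A] [Module K A]
    [AddCommGroup V] [Module K V] (br : A → A → A → A)
    (l : A → A → V → V) (m : A → V → A → V) (r : V → A → A → V) : Prop :=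
  Trilinear K l ∧ Trilinear K m ∧ Trilinear K r ∧
  (∀ a₁ a₂ a₃ a₄ u, l a₁ a₂ (l a₃ a₄ u)
      = l (br a₁ a₂ a₃) a₄ u + l a₃ (br a₁ a₂ a₄) u + l a₃ a₄ (l a₁ a₂ u)) ∧
  (∀ a₁ a₂ a₃ a₅ u, l a₁ a₂ (m a₃ u a₅)
      = m (br a₁ a₂ a₃) u a₅ + m a₃ (l a₁ a₂ u) a₅ + m a₃ u (br a₁ a₂ a₅)) ∧
  (∀ a₁ a₂ a₄ a₅ u, l a₁ a₂ (r u a₄ a₅)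
      = r (l a₁ a₂ u) a₄ a₅ + r u (br a₁ a₂ a₄) a₅ + r u a₄ (br a₁ a₂ a₅)) ∧
  (∀ a₁ a₃ a₄ a₅ u, m a₁ u (br a₃ a₄ a₅)
      = r (m a₁ u a₃) a₄ a₅ + m a₃ (m a₁ u a₄) a₅ + l a₃ a₄ (m a₁ u a₅)) ∧
  (∀ a₂ a₃ a₄ a₅ u, r u a₂ (br a₃ a₄ a₅)
      = r (r u a₂ a₃) a₄ a₅ + m a₃ (r u a₂ a₄) a₅ + l a₃ a₄ (r u a₂ a₅))

/-!
A pair `(l, h)` lies on `Gr(Λ)` iff `l = Λ h`, and the bracket of `Λ h₁ + h₁`, `Λ h₂ + h₂`,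
`Λ h₃ + h₃` in `L ⋉_ρ H` is `[Λ h₁, Λ h₂, Λ h₃]_L + (ρ(Λ h₁, Λ h₂) h₃ + [h₁, h₂, h₃]_H)`; so it
lies on the graph exactly when the embedding tensor identity holds for `h₁, h₂, h₃`.
-/

section

variable {K L H : Type*} [Field K] [AddCommGroup L] [Module K L] [AddCommGroup H] [Module K H]

/-- The bracket of `L ⋉_ρ H`, with `l + h ∈ L ⊕ H` written as the pair `(l, h)`. -/
def hemisemidirectBracket (brL : L → L → L → L) (brH : H → H → H → H) (ρ : L → L → H → H)
    (x y z : L × H) : L × H :=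
  (brL x.1 y.1 z.1, ρ x.1 y.1 z.2 + brH x.2 y.2 z.2)

/-- `Gr(Λ) = {Λ h + h}`; unlike `LinearMap.graph`, the value `Λ h` comes first. -/
def tensorGraph (Λ : H →ₗ[K] L) : Set (L × H) :=
  {x | ∃ h, x = (Λ h, h)}

def IsClosedUnderBracket {V : Type*} (br : V → V → V → V) (S : Set V) : Prop :=
  ∀ x y z, x ∈ S → y ∈ S → z ∈ S → br x y z ∈ S

theorem mk_mem_tensorGraph_iff (Λ : H →ₗ[K] L) (l : L) (h : H) :
    (l, h) ∈ tensorGraph Λ ↔ l = Λ h := by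
  constructor
  · rintro ⟨h', hh'⟩
    obtain ⟨rfl, rfl⟩ := Prod.mk.inj hh'
    rfl
  · rintro rfl
    exact ⟨h, rfl⟩

theorem hemisemidirectBracket_mk_mem_tensorGraph_iff (brL : L → L → L → L)
    (brH : H → H → H → H) (ρ : L → L → H → H) (Λ : H →ₗ[K] L) (h₁ h₂ h₃ : H) :
    hemisemidirectBracket brL brH ρ (Λ h₁, h₁) (Λ h₂, h₂) (Λ h₃, h₃) ∈ tensorGraph Λ ↔
      brL (Λ h₁) (Λ h₂) (Λ h₃) = Λ (ρ (Λ h₁) (Λ h₂) h₃ + brH h₁ h₂ h₃) :=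
  mk_mem_tensorGraph_iff Λ _ _

theorem isClosedUnderBracket_tensorGraph_iff (brL : L → L → L → L) (brH : H → H → H → H)
    (ρ : L → L → H → H) (Λ : H →ₗ[K] L) :
    IsClosedUnderBracket (hemisemidirectBracket brL brH ρ) (tensorGraph Λ) ↔
      IsNAEmbeddingTensor K brL brH ρ Λ := by
  constructor
  · intro hS h₁ h₂ h₃
    exact (hemisemidirectBracket_mk_mem_tensorGraph_iff brL brH ρ Λ h₁ h₂ h₃).1
      (hS _ _ _ ⟨h₁, rfl⟩ ⟨h₂, rfl⟩ ⟨h₃, rfl⟩)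
  · rintro hΛ _ _ _ ⟨h₁, rfl⟩ ⟨h₂, rfl⟩ ⟨h₃, rfl⟩
    exact (hemisemidirectBracket_mk_mem_tensorGraph_iff brL brH ρ Λ h₁ h₂ h₃).2 (hΛ h₁ h₂ h₃)

end

theorem naEmbeddingTensor_iff_graph_subalgebra_general
    {K L H : Type*} [Field K] [AddCommGroup L] [Module K L] [AddCommGroup H] [Module K H]
    (brL : L → L → L → L) (brH : H → H → H → H) (ρ : L → L → H → H)
    (Λ : H →ₗ[K] L) :
    IsNAEmbeddingTensor K brL brH ρ Λ ↔
      ∀ p q r : L × H,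
        p ∈ {x : L × H | ∃ h, x = (Λ h, h)} →
        q ∈ {x : L × H | ∃ h, x = (Λ h, h)} →
        r ∈ {x : L × H | ∃ h, x = (Λ h, h)} →
        (brL p.1 q.1 r.1, ρ p.1 q.1 r.2 + brH p.2 q.2 r.2) ∈ {x : L × H | ∃ h, x = (Λ h, h)} := by
  exact (isClosedUnderBracket_tensorGraph_iff brL brH ρ Λ).symm

/-- `Λ` is a nonabelian embedding tensor iff its graph is a subalgebra of
the nonabelian hemisemidirect product 3-Leibniz algebra `L ⋉_ρ H`. -/
theorem naEmbeddingTensor_iff_graph_subalgebra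
    {K L H : Type*} [Field K] [AddCommGroup L] [Module K L] [AddCommGroup H] [Module K H]
    (brL : L → L → L → L) (brH : H → H → H → H) (ρ : L → L → H → H)
    (hL : Is3Lie K brL) (hH : Is3Lie K brH) (hρ : IsCoherentAction K brL brH ρ)
    (Λ : H →ₗ[K] L) :
    IsNAEmbeddingTensor K brL brH ρ Λ ↔
      ∀ p q r : L × H,
        p ∈ {x : L × H | ∃ h, x = (Λ h, h)} →
        q ∈ {x : L × H | ∃ h, x = (Λ h, h)} →
        r ∈ {x : L × H | ∃ h, x = (Λ h, h)} →
        (brL p.1 q.1 r.1, ρ p.1 q.1 r.2 + brH p.2 q.2 r.2) ∈ {x : L × H | ∃ h, x = (Λ h, h)} :=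
  naEmbeddingTensor_iff_graph_subalgebra_general brL brH ρ Λ
end

section
/- Let $\Lambda:H\to L$ be a nonabelian embedding tensor on a 3-Lie algebra $L$ with respect to a coherent action $(H,[-,-,-]_H;\rho^\dag)$. Then the bracket $[h_1,h_2,h_3]_\Lambda := \rho(\Lambda h_1,\Lambda h_2)h_3 + [h_1,h_2,h_3]_H$ defines a 3-Leibniz algebra structure on $H$, and $\Lambda$ is an algebra homomorphism from $(H,[-,-,-]_\Lambda)$ to $(L,[-,-,-]_L)$. -/
/-!
Coherence decouples the two halves of the descendent bracket
`[a,b,c]_Λ = ρ(Λa,Λb)c + [a,b,c]_H`: the bracket of `H` vanishes as soon as one argument lies in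
the image of `ρ`, and `ρ` kills brackets of `H`. After the embedding-tensor identity replaces
`Λ[a,b,c]_Λ` by `[Λa,Λb,Λc]_L`, the fundamental identity for `[-,-,-]_Λ` therefore splits into the
fundamental identity of `[-,-,-]_H` and the second representation identity of `ρ`.
-/

section Trilinear

variable {K : Type*} [Field K] {U₁ U₂ V₁ V₂ V₃ W : Type*}
  [AddCommGroup U₁] [Module K U₁] [AddCommGroup U₂] [Module K U₂]
  [AddCommGroup V₁] [Module K V₁] [AddCommGroup V₂] [Module K V₂]
  [AddCommGroup V₃] [Module K V₃] [AddCommGroup W] [Module K W]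

theorem Trilinear.add {f g : V₁ → V₂ → V₃ → W} (hf : Trilinear K f) (hg : Trilinear K g) :
    Trilinear K (fun a b c => f a b c + g a b c) := by
  obtain ⟨hf₁, hfs₁, hf₂, hfs₂, hf₃, hfs₃⟩ := hf
  obtain ⟨hg₁, hgs₁, hg₂, hgs₂, hg₃, hgs₃⟩ := hg
  refine ⟨?_, ?_, ?_, ?_, ?_, ?_⟩ <;> intros <;>
    simp only [hf₁, hfs₁, hf₂, hfs₂, hf₃, hfs₃, hg₁, hgs₁, hg₂, hgs₂, hg₃, hgs₃, smul_add] <;> abel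

theorem Trilinear.comp_linearMap₁₂ {f : V₁ → V₂ → V₃ → W} (hf : Trilinear K f)
    (φ₁ : U₁ →ₗ[K] V₁) (φ₂ : U₂ →ₗ[K] V₂) :
    Trilinear K (fun a b c => f (φ₁ a) (φ₂ b) c) := by
  obtain ⟨hf₁, hfs₁, hf₂, hfs₂, hf₃, hfs₃⟩ := hf
  exact ⟨by simp [hf₁], by simp [hfs₁], by simp [hf₂], by simp [hfs₂], by simp [hf₃],
    by simp [hfs₃]⟩

end Trilinear

section Descendent

variable {K L H : Type*} [Field K] [AddCommGroup L] [Module K L] [AddCommGroup H] [Module K H]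
  {brL : L → L → L → L} {brH : H → H → H → H} {ρ : L → L → H → H}

namespace IsCoherentAction

theorem bracket_act_left_eq_zero (hρ : IsCoherentAction K brL brH ρ) (a b : L) (h x y : H) :
    brH (ρ a b h) x y = 0 :=
  hρ.2.2 a b h x y

theorem bracket_act_mid_eq_zero (hρ : IsCoherentAction K brL brH ρ) (hskew : Skew brH) (a b : L)
    (h x y : H) : brH x (ρ a b h) y = 0 := by
  rw [hskew.1, hρ.bracket_act_left_eq_zero, neg_zero]

theorem bracket_act_right_eq_zero (hρ : IsCoherentAction K brL brH ρ) (hskew : Skew brH)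
    (a b : L) (h x y : H) : brH x y (ρ a b h) = 0 := by
  rw [hskew.2, hρ.bracket_act_mid_eq_zero hskew, neg_zero]

theorem act_bracket_eq_zero (hρ : IsCoherentAction K brL brH ρ) (hskew : Skew brH) (a b : L)
    (h₁ h₂ h₃ : H) : ρ a b (brH h₁ h₂ h₃) = 0 := by
  rw [hρ.2.1, hρ.bracket_act_left_eq_zero, hρ.bracket_act_mid_eq_zero hskew,
    hρ.bracket_act_right_eq_zero hskew, add_zero, add_zero]

end IsCoherentAction

def descendentBracket (ρ : L → L → H → H) (brH : H → H → H → H) (Λ : H → L) :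
    H → H → H → H :=
  fun h₁ h₂ h₃ => ρ (Λ h₁) (Λ h₂) h₃ + brH h₁ h₂ h₃

theorem IsNAEmbeddingTensor.map_descendentBracket {Λ : H →ₗ[K] L}
    (hΛ : IsNAEmbeddingTensor K brL brH ρ Λ) (h₁ h₂ h₃ : H) :
    Λ (descendentBracket ρ brH Λ h₁ h₂ h₃) = brL (Λ h₁) (Λ h₂) (Λ h₃) :=
  (hΛ h₁ h₂ h₃).symm

theorem trilinear_descendentBracket (hH : Is3Lie K brH) (hρ : IsCoherentAction K brL brH ρ)
    (Λ : H →ₗ[K] L) : Trilinear K (descendentBracket ρ brH Λ) :=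
  (hρ.1.1.comp_linearMap₁₂ Λ Λ).add hH.1

theorem descendentBracket_descendentBracket_left (hH : Is3Lie K brH)
    (hρ : IsCoherentAction K brL brH ρ) {Λ : H →ₗ[K] L} (hΛ : IsNAEmbeddingTensor K brL brH ρ Λ)
    (a b c d e : H) :
    descendentBracket ρ brH Λ (descendentBracket ρ brH Λ a b c) d e
      = ρ (brL (Λ a) (Λ b) (Λ c)) (Λ d) e + brH (brH a b c) d e := by
  obtain ⟨hH_add₁, -⟩ := hH.1
  rw [descendentBracket, hΛ.map_descendentBracket, descendentBracket, hH_add₁,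
    hρ.bracket_act_left_eq_zero, zero_add]

theorem descendentBracket_descendentBracket_mid (hH : Is3Lie K brH)
    (hρ : IsCoherentAction K brL brH ρ) {Λ : H →ₗ[K] L} (hΛ : IsNAEmbeddingTensor K brL brH ρ Λ)
    (a b c d e : H) :
    descendentBracket ρ brH Λ c (descendentBracket ρ brH Λ a b d) e
      = ρ (Λ c) (brL (Λ a) (Λ b) (Λ d)) e + brH c (brH a b d) e := by
  obtain ⟨-, -, hH_add₂, -⟩ := hH.1
  rw [descendentBracket, hΛ.map_descendentBracket, descendentBracket, hH_add₂,
    hρ.bracket_act_mid_eq_zero hH.2.1, zero_add]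

theorem descendentBracket_descendentBracket_right (hH : Is3Lie K brH)
    (hρ : IsCoherentAction K brL brH ρ) (Λ : H → L) (a b c d e : H) :
    descendentBracket ρ brH Λ a b (descendentBracket ρ brH Λ c d e)
      = ρ (Λ a) (Λ b) (ρ (Λ c) (Λ d) e) + brH a b (brH c d e) := by
  obtain ⟨-, -, -, -, hρ_add₃, -⟩ := hρ.1.1
  obtain ⟨-, -, -, -, hH_add₃, -⟩ := hH.1
  simp only [descendentBracket, hρ_add₃, hH_add₃, hρ.act_bracket_eq_zero hH.2.1,
    hρ.bracket_act_right_eq_zero hH.2.1, add_zero, zero_add]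

theorem fundId_descendentBracket (hH : Is3Lie K brH) (hρ : IsCoherentAction K brL brH ρ)
    {Λ : H →ₗ[K] L} (hΛ : IsNAEmbeddingTensor K brL brH ρ Λ) :
    FundId (descendentBracket ρ brH Λ) := by
  obtain ⟨-, -, -, hρ_comm⟩ := hρ.1
  intro a b c d e
  rw [descendentBracket_descendentBracket_right hH hρ,
    descendentBracket_descendentBracket_left hH hρ hΛ,
    descendentBracket_descendentBracket_mid hH hρ hΛ,
    descendentBracket_descendentBracket_right hH hρ, hρ_comm, hH.2.2 a b c d e]
  abel

end Descendent

theorem descendent_3Leibniz_general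
    {K L H : Type*} [Field K] [AddCommGroup L] [Module K L] [AddCommGroup H] [Module K H]
    (brL : L → L → L → L) (brH : H → H → H → H) (ρ : L → L → H → H)
    (hH : Is3Lie K brH) (hρ : IsCoherentAction K brL brH ρ)
    (Λ : H →ₗ[K] L) (hΛ : IsNAEmbeddingTensor K brL brH ρ Λ) :
    Is3Leibniz K (fun h₁ h₂ h₃ => ρ (Λ h₁) (Λ h₂) h₃ + brH h₁ h₂ h₃) ∧
      ∀ h₁ h₂ h₃, Λ (ρ (Λ h₁) (Λ h₂) h₃ + brH h₁ h₂ h₃) = brL (Λ h₁) (Λ h₂) (Λ h₃) :=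
  ⟨⟨trilinear_descendentBracket hH hρ Λ, fundId_descendentBracket hH hρ hΛ⟩,
    hΛ.map_descendentBracket⟩

/-- the descendent bracket `[h₁,h₂,h₃]_Λ = ρ(Λh₁,Λh₂)h₃ + [h₁,h₂,h₃]_H`
makes `H` a 3-Leibniz algebra, and `Λ` is an algebra homomorphism to `(L, brL)`. -/
theorem descendent_3Leibniz
    {K L H : Type*} [Field K] [AddCommGroup L] [Module K L] [AddCommGroup H] [Module K H]
    (brL : L → L → L → L) (brH : H → H → H → H) (ρ : L → L → H → H)
    (hL : Is3Lie K brL) (hH : Is3Lie K brH) (hρ : IsCoherentAction K brL brH ρ)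
    (Λ : H →ₗ[K] L) (hΛ : IsNAEmbeddingTensor K brL brH ρ Λ) :
    Is3Leibniz K (fun h₁ h₂ h₃ => ρ (Λ h₁) (Λ h₂) h₃ + brH h₁ h₂ h₃) ∧
      ∀ h₁ h₂ h₃, Λ (ρ (Λ h₁) (Λ h₂) h₃ + brH h₁ h₂ h₃) = brL (Λ h₁) (Λ h₂) (Λ h₃) :=
  descendent_3Leibniz_general brL brH ρ hH hρ Λ hΛ
end

section
/- Let $(f_L,f_H)$ be a homomorphism from a nonabelian embedding tensor 3-Lie algebra $H\xrightarrow{\Lambda_1}L$ to $H\xrightarrow{\Lambda_2}L$. Then $f_H$ is a homomorphism of 3-Leibniz algebras from the descendent algebra $(H,[-,-,-]_{\Lambda_1})$ to $(H,[-,-,-]_{\Lambda_2})$. -/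
theorem hom_descendent_3Leibniz_general
    {K L H : Type*} [Field K] [AddCommGroup L] [Module K L] [AddCommGroup H] [Module K H]
    (brH : H → H → H → H) (ρ : L → L → H → H)
    (Λ₁ Λ₂ : H →ₗ[K] L)
    (fL : L →ₗ[K] L) (fH : H →ₗ[K] H)
    (hfH : ∀ a b c, fH (brH a b c) = brH (fH a) (fH b) (fH c))
    (hcomm : ∀ h, Λ₂ (fH h) = fL (Λ₁ h))
    (hequiv : ∀ a b h, fH (ρ a b h) = ρ (fL a) (fL b) (fH h)) :
    ∀ h₁ h₂ h₃, fH (ρ (Λ₁ h₁) (Λ₁ h₂) h₃ + brH h₁ h₂ h₃)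
      = ρ (Λ₂ (fH h₁)) (Λ₂ (fH h₂)) (fH h₃) + brH (fH h₁) (fH h₂) (fH h₃) := by
  intro h₁ h₂ h₃
  rw [map_add, hequiv, hfH, hcomm, hcomm]

/-- a homomorphism `(f_L, f_H)` of nonabelian embedding tensor 3-Lie algebras
induces a homomorphism `f_H` of the descendent 3-Leibniz algebras. -/
theorem hom_descendent_3Leibniz
    {K L H : Type*} [Field K] [AddCommGroup L] [Module K L] [AddCommGroup H] [Module K H]
    (brL : L → L → L → L) (brH : H → H → H → H) (ρ : L → L → H → H)
    (hL : Is3Lie K brL) (hH : Is3Lie K brH) (hρ : IsCoherentAction K brL brH ρ)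
    (Λ₁ Λ₂ : H →ₗ[K] L)
    (hΛ₁ : IsNAEmbeddingTensor K brL brH ρ Λ₁) (hΛ₂ : IsNAEmbeddingTensor K brL brH ρ Λ₂)
    (fL : L →ₗ[K] L) (fH : H →ₗ[K] H)
    (hfL : ∀ a b c, fL (brL a b c) = brL (fL a) (fL b) (fL c))
    (hfH : ∀ a b c, fH (brH a b c) = brH (fH a) (fH b) (fH c))
    (hcomm : ∀ h, Λ₂ (fH h) = fL (Λ₁ h))
    (hequiv : ∀ a b h, fH (ρ a b h) = ρ (fL a) (fL b) (fH h)) :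
    ∀ h₁ h₂ h₃, fH (ρ (Λ₁ h₁) (Λ₁ h₂) h₃ + brH h₁ h₂ h₃)
      = ρ (Λ₂ (fH h₁)) (Λ₂ (fH h₂)) (fH h₃) + brH (fH h₁) (fH h₂) (fH h₃) :=
  hom_descendent_3Leibniz_general brH ρ Λ₁ Λ₂ fL fH hfH hcomm hequiv
end

section
/- Let $\Lambda:H\to L$ be a nonabelian embedding tensor on a 3-Lie algebra $L$ with respect to a coherent action $(H,[-,-,-]_H;\rho^\dag)$. Define $\{h_1,h_2,h_3\}_\Lambda := \rho(\Lambda h_1,\Lambda h_2)h_3$. Then $(H,[-,-,-]_H,\{-,-,-\}_\Lambda)$ is a 3-Leibniz-Lie algebra. -/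
/-! The induced product `{h₁,h₂,h₃}_Λ = ρ(Λh₁,Λh₂)h₃` inherits trilinearity from `ρ` and `Λ`.
Its Leibniz identity is the second representation identity of `ρ` evaluated on `Λh₁, …, Λh₄`,
after the embedding-tensor equation rewrites `[Λh₁,Λh₂,Λhᵢ]_L` as `Λ({h₁,h₂,hᵢ}_Λ + [h₁,h₂,hᵢ]_H)`.
Both vanishing conditions come from `[ρ(a,b)h₁,h₂,h₃]_H = 0`: skew-symmetry moves `ρ(a,b)h`
into the first slot of `[-,-,-]_H`, and `ρ(a,b)` acts on `[h₁,h₂,h₃]_H` as a derivation. -/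

section

variable {K V₁ V₂ V₃ W₁ W₂ U : Type*} [Field K]
  [AddCommGroup V₁] [Module K V₁] [AddCommGroup V₂] [Module K V₂] [AddCommGroup V₃] [Module K V₃]
  [AddCommGroup W₁] [Module K W₁] [AddCommGroup W₂] [Module K W₂] [AddCommGroup U] [Module K U]

theorem Trilinear.comp_linearMap₂ {ρ : W₁ → W₂ → V₃ → U} (hρ : Trilinear K ρ)
    (f : V₁ →ₗ[K] W₁) (g : V₂ →ₗ[K] W₂) : Trilinear K (fun x y z => ρ (f x) (g y) z) := by
  obtain ⟨add₁, smul₁, add₂, smul₂, add₃, smul₃⟩ := hρ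
  refine ⟨?_, ?_, ?_, ?_, ?_, ?_⟩ <;> intros <;>
    simp only [map_add, map_smul, add₁, smul₁, add₂, smul₂, add₃, smul₃]

end

section

variable {V : Type*} [AddCommGroup V] {f : V → V → V → V}

theorem Skew.apply_mid_eq_zero (hf : Skew f) {a : V} (ha : ∀ b c, f a b c = 0) (b c : V) :
    f b a c = 0 := by
  rw [hf.1, ha, neg_zero]

theorem Skew.apply_right_eq_zero (hf : Skew f) {a : V} (ha : ∀ b c, f a b c = 0) (b c : V) :
    f b c a = 0 := by
  rw [hf.2, hf.apply_mid_eq_zero ha, neg_zero]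

end

section

variable {K L H : Type*} [Field K] [AddCommGroup L] [Module K L] [AddCommGroup H] [Module K H]
  {brL : L → L → L → L} {brH : H → H → H → H} {ρ : L → L → H → H}

theorem IsCoherentAction.apply_bracket_eq_zero (hρ : IsCoherentAction K brL brH ρ)
    (hH : Skew brH) (a b : L) (h₁ h₂ h₃ : H) : ρ a b (brH h₁ h₂ h₃) = 0 := by
  obtain ⟨-, derivation, vanishing⟩ := hρ
  rw [derivation, vanishing, hH.apply_mid_eq_zero (vanishing a b h₂),
    hH.apply_right_eq_zero (vanishing a b h₃), add_zero, add_zero]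

theorem IsNAEmbeddingTensor.induced_leibniz {Λ : H →ₗ[K] L} (hρ : Is3LieRep K brL ρ)
    (hΛ : IsNAEmbeddingTensor K brL brH ρ Λ) (h₁ h₂ h₃ h₄ h₅ : H) :
    ρ (Λ h₁) (Λ h₂) (ρ (Λ h₃) (Λ h₄) h₅)
      = ρ (Λ (ρ (Λ h₁) (Λ h₂) h₃)) (Λ h₄) h₅ + ρ (Λ h₃) (Λ (ρ (Λ h₁) (Λ h₂) h₄)) h₅
        + ρ (Λ h₃) (Λ h₄) (ρ (Λ h₁) (Λ h₂) h₅)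
        + ρ (Λ (brH h₁ h₂ h₃)) (Λ h₄) h₅ + ρ (Λ h₃) (Λ (brH h₁ h₂ h₄)) h₅ := by
  obtain ⟨⟨add₁, -, add₂, -⟩, -, -, rep⟩ := hρ
  rw [rep, hΛ, hΛ, map_add, map_add, add₁, add₂]
  abel

end

theorem naEmbeddingTensor_induces_3LeibnizLie_general
    {K L H : Type*} [Field K] [AddCommGroup L] [Module K L] [AddCommGroup H] [Module K H]
    (brL : L → L → L → L) (brH : H → H → H → H) (ρ : L → L → H → H)
    (hH : Is3Lie K brH) (hρ : IsCoherentAction K brL brH ρ)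
    (Λ : H →ₗ[K] L) (hΛ : IsNAEmbeddingTensor K brL brH ρ Λ) :
    Is3LeibnizLie K brH (fun h₁ h₂ h₃ => ρ (Λ h₁) (Λ h₂) h₃) :=
  ⟨hH, hρ.1.1.comp_linearMap₂ Λ Λ, hΛ.induced_leibniz hρ.1,
    fun _ _ => hρ.apply_bracket_eq_zero hH.2.1 _ _, fun _ _ _ => hρ.2.2 _ _ _⟩

/-- a nonabelian embedding tensor 3-Lie algebra induces a
3-Leibniz-Lie algebra via `{h₁,h₂,h₃}_Λ := ρ(Λh₁,Λh₂)h₃`. -/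
theorem naEmbeddingTensor_induces_3LeibnizLie
    {K L H : Type*} [Field K] [AddCommGroup L] [Module K L] [AddCommGroup H] [Module K H]
    (brL : L → L → L → L) (brH : H → H → H → H) (ρ : L → L → H → H)
    (hL : Is3Lie K brL) (hH : Is3Lie K brH) (hρ : IsCoherentAction K brL brH ρ)
    (Λ : H →ₗ[K] L) (hΛ : IsNAEmbeddingTensor K brL brH ρ Λ) :
    Is3LeibnizLie K brH (fun h₁ h₂ h₃ => ρ (Λ h₁) (Λ h₂) h₃) :=
  naEmbeddingTensor_induces_3LeibnizLie_general brL brH ρ hH hρ Λ hΛ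
end

section
/- Let $(f_L,f_H)$ be a homomorphism from $H\xrightarrow{\Lambda_1}L$ to $H\xrightarrow{\Lambda_2}L$. Then $f_H$ is a homomorphism of 3-Leibniz-Lie algebras from $(H,[-,-,-]_H,\{-,-,-\}_{\Lambda_1})$ to $(H,[-,-,-]_H,\{-,-,-\}_{\Lambda_2})$, i.e. $f_H(\{h_1,h_2,h_3\}_{\Lambda_1})=\{f_H(h_1),f_H(h_2),f_H(h_3)\}_{\Lambda_2}$. -/
theorem hom_3LeibnizLie_general
    {K L H : Type*} [Field K] [AddCommGroup L] [Module K L] [AddCommGroup H] [Module K H]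
    (ρ : L → L → H → H)
    (Λ₁ Λ₂ : H →ₗ[K] L)
    (fL : L →ₗ[K] L) (fH : H →ₗ[K] H)
    (hcomm : ∀ h, Λ₂ (fH h) = fL (Λ₁ h))
    (hequiv : ∀ a b h, fH (ρ a b h) = ρ (fL a) (fL b) (fH h)) :
    ∀ h₁ h₂ h₃, fH (ρ (Λ₁ h₁) (Λ₁ h₂) h₃)
      = ρ (Λ₂ (fH h₁)) (Λ₂ (fH h₂)) (fH h₃) := by
  intro h₁ h₂ h₃
  rw [hequiv, hcomm, hcomm]

/-- a homomorphism `(f_L, f_H)` of nonabelian embedding tensor 3-Lie algebras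
induces a homomorphism `f_H` of the induced 3-Leibniz-Lie algebras. -/
theorem hom_3LeibnizLie
    {K L H : Type*} [Field K] [AddCommGroup L] [Module K L] [AddCommGroup H] [Module K H]
    (brL : L → L → L → L) (brH : H → H → H → H) (ρ : L → L → H → H)
    (hL : Is3Lie K brL) (hH : Is3Lie K brH) (hρ : IsCoherentAction K brL brH ρ)
    (Λ₁ Λ₂ : H →ₗ[K] L)
    (hΛ₁ : IsNAEmbeddingTensor K brL brH ρ Λ₁) (hΛ₂ : IsNAEmbeddingTensor K brL brH ρ Λ₂)
    (fL : L →ₗ[K] L) (fH : H →ₗ[K] H)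
    (hfL : ∀ a b c, fL (brL a b c) = brL (fL a) (fL b) (fL c))
    (hfH : ∀ a b c, fH (brH a b c) = brH (fH a) (fH b) (fH c))
    (hcomm : ∀ h, Λ₂ (fH h) = fL (Λ₁ h))
    (hequiv : ∀ a b h, fH (ρ a b h) = ρ (fL a) (fL b) (fH h)) :
    ∀ h₁ h₂ h₃, fH (ρ (Λ₁ h₁) (Λ₁ h₂) h₃)
      = ρ (Λ₂ (fH h₁)) (Λ₂ (fH h₂)) (fH h₃) :=
  hom_3LeibnizLie_general ρ Λ₁ Λ₂ fL fH hcomm hequiv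
end

section
/- Let $H\xrightarrow{\Lambda}L$ be a nonabelian embedding tensor 3-Lie algebra. Define maps $\mathfrak{l}_\Lambda(h_1,h_2,l)=[\Lambda h_1,\Lambda h_2,l]_L$, $\mathfrak{m}_\Lambda(h_1,l,h_2)=[\Lambda h_1,l,\Lambda h_2]_L-\Lambda\rho(\Lambda h_1,l)h_2$, $\mathfrak{r}_\Lambda(l,h_1,h_2)=[l,\Lambda h_1,\Lambda h_2]_L-\Lambda\rho(l,\Lambda h_1)h_2$. Then $(L;\mathfrak{l}_\Lambda,\mathfrak{m}_\Lambda,\mathfrak{r}_\Lambda)$ is a representation of the descendent 3-Leibniz algebra $(H,[-,-,-]_\Lambda)$. -/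
/-!
Each identity splits into an `L`-part and a `Λ (·)`-part. The `L`-part is the fundamental
identity of `brL`, after rewriting `Λ [a, b, c]_Λ = [Λ a, Λ b, Λ c]`. For the `Λ`-part, the
actions on `Λ`-images are again `Λ`-images (`𝔩_Λ(a, b, Λ h) = Λ [a, b, h]_Λ`,
`𝔪_Λ(a, Λ h, b) = Λ [a, h, b]_H`, `𝔯_Λ(Λ h, a, b) = Λ [h, a, b]_H`), coherence and
skew-symmetry kill `[-,-,-]_H` as soon as a `ρ`-value sits in one of its first two slots, and
what remains is the representation identity
`ρ(x, y) ρ(z, w) = ρ(z, w) ρ(x, y) + ρ([x, y, z], w) + ρ(z, [x, y, w])` applied with two of the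
four arguments in the image of `Λ`.
-/

namespace Trilinear

variable {K : Type*} [Field K] {V₁ V₂ V₃ W : Type*}
  [AddCommGroup V₁] [Module K V₁] [AddCommGroup V₂] [Module K V₂]
  [AddCommGroup V₃] [Module K V₃] [AddCommGroup W] [Module K W]
  {f g : V₁ → V₂ → V₃ → W}

theorem map_add₃ (hf : Trilinear K f) (a : V₁) (b : V₂) (x y : V₃) :
    f a b (x + y) = f a b x + f a b y :=
  hf.2.2.2.2.1 a b x y

theorem map_sub₁ (hf : Trilinear K f) (x y : V₁) (b : V₂) (c : V₃) :
    f (x - y) b c = f x b c - f y b c :=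
  (AddMonoidHom.mk' (f · b c) fun x y => hf.1 x y b c).map_sub x y

theorem map_sub₂ (hf : Trilinear K f) (a : V₁) (x y : V₂) (c : V₃) :
    f a (x - y) c = f a x c - f a y c :=
  (AddMonoidHom.mk' (f a · c) fun x y => hf.2.2.1 a x y c).map_sub x y

theorem map_sub₃ (hf : Trilinear K f) (a : V₁) (b : V₂) (x y : V₃) :
    f a b (x - y) = f a b x - f a b y :=
  (AddMonoidHom.mk' (f a b ·) fun x y => hf.map_add₃ a b x y).map_sub x y

theorem comp_linearMap {U₁ U₂ U₃ : Type*} [AddCommGroup U₁] [Module K U₁]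
    [AddCommGroup U₂] [Module K U₂] [AddCommGroup U₃] [Module K U₃]
    (hf : Trilinear K f) (g₁ : U₁ →ₗ[K] V₁) (g₂ : U₂ →ₗ[K] V₂) (g₃ : U₃ →ₗ[K] V₃) :
    Trilinear K fun a b c => f (g₁ a) (g₂ b) (g₃ c) := by
  obtain ⟨add₁, smul₁, add₂, smul₂, add₃, smul₃⟩ := hf
  refine ⟨fun _ _ _ _ => ?_, fun _ _ _ _ => ?_, fun _ _ _ _ => ?_, fun _ _ _ _ => ?_,
    fun _ _ _ _ => ?_, fun _ _ _ _ => ?_⟩ <;> simp only [map_add, map_smul, *]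

theorem linearMap_comp {W' : Type*} [AddCommGroup W'] [Module K W'] (hf : Trilinear K f)
    (φ : W →ₗ[K] W') : Trilinear K fun a b c => φ (f a b c) := by
  obtain ⟨add₁, smul₁, add₂, smul₂, add₃, smul₃⟩ := hf
  refine ⟨fun _ _ _ _ => ?_, fun _ _ _ _ => ?_, fun _ _ _ _ => ?_, fun _ _ _ _ => ?_,
    fun _ _ _ _ => ?_, fun _ _ _ _ => ?_⟩ <;> simp only [map_add, map_smul, *]

theorem sub (hf : Trilinear K f) (hg : Trilinear K g) :
    Trilinear K fun a b c => f a b c - g a b c := by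
  obtain ⟨f_add₁, f_smul₁, f_add₂, f_smul₂, f_add₃, f_smul₃⟩ := hf
  obtain ⟨g_add₁, g_smul₁, g_add₂, g_smul₂, g_add₃, g_smul₃⟩ := hg
  refine ⟨fun _ _ _ _ => ?_, fun _ _ _ _ => ?_, fun _ _ _ _ => ?_, fun _ _ _ _ => ?_,
    fun _ _ _ _ => ?_, fun _ _ _ _ => ?_⟩ <;> simp only [smul_sub, *] <;> abel

end Trilinear

namespace IsCoherentAction

variable {K L H : Type*} [Field K] [AddCommGroup L] [Module K L] [AddCommGroup H] [Module K H]
  {brL : L → L → L → L} {brH : H → H → H → H} {ρ : L → L → H → H}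

theorem brH_mid_rho_eq_zero (hρ : IsCoherentAction K brL brH ρ) (hH : Skew brH)
    (a b : L) (h₁ h₂ h₃ : H) : brH h₁ (ρ a b h₂) h₃ = 0 := by
  rw [hH.1, hρ.2.2, neg_zero]

/-- Since `ρ` acts by derivations of `brH` and `brH` vanishes as soon as one of the first two
slots lies in the image of `ρ`, the action only sees the last slot. -/
theorem rho_brH (hρ : IsCoherentAction K brL brH ρ) (hH : Skew brH)
    (a b : L) (h₁ h₂ h₃ : H) : ρ a b (brH h₁ h₂ h₃) = brH h₁ h₂ (ρ a b h₃) := by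
  rw [hρ.2.1, hρ.2.2, hρ.brH_mid_rho_eq_zero hH, zero_add, zero_add]

end IsCoherentAction

section InducedRepresentation

variable {K L H : Type*} [Field K] [AddCommGroup L] [Module K L] [AddCommGroup H] [Module K H]
  (brL : L → L → L → L) (brH : H → H → H → H) (ρ : L → L → H → H) (Λ : H →ₗ[K] L)

def descBracket (h₁ h₂ h₃ : H) : H :=
  ρ (Λ h₁) (Λ h₂) h₃ + brH h₁ h₂ h₃

-- `inducedActL`, `inducedActM`, `inducedActR` are the paper's `𝔩_Λ`, `𝔪_Λ`, `𝔯_Λ`.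
def inducedActL (h₁ h₂ : H) (l : L) : L :=
  brL (Λ h₁) (Λ h₂) l

def inducedActM (h₁ : H) (l : L) (h₂ : H) : L :=
  brL (Λ h₁) l (Λ h₂) - Λ (ρ (Λ h₁) l h₂)

def inducedActR (l : L) (h₁ h₂ : H) : L :=
  brL l (Λ h₁) (Λ h₂) - Λ (ρ l (Λ h₁) h₂)

variable {brL brH ρ Λ}

theorem trilinear_inducedActL (hL : Trilinear K brL) : Trilinear K (inducedActL brL Λ) :=
  hL.comp_linearMap Λ Λ LinearMap.id

theorem trilinear_inducedActM (hL : Trilinear K brL) (hρ : Trilinear K ρ) :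
    Trilinear K (inducedActM brL ρ Λ) :=
  (hL.comp_linearMap Λ LinearMap.id Λ).sub
    ((hρ.comp_linearMap Λ LinearMap.id LinearMap.id).linearMap_comp Λ)

theorem trilinear_inducedActR (hL : Trilinear K brL) (hρ : Trilinear K ρ) :
    Trilinear K (inducedActR brL ρ Λ) :=
  (hL.comp_linearMap LinearMap.id Λ Λ).sub
    ((hρ.comp_linearMap LinearMap.id Λ LinearMap.id).linearMap_comp Λ)

theorem map_descBracket (hΛ : IsNAEmbeddingTensor K brL brH ρ Λ) (h₁ h₂ h₃ : H) :
    Λ (descBracket brH ρ Λ h₁ h₂ h₃) = brL (Λ h₁) (Λ h₂) (Λ h₃) :=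
  (hΛ h₁ h₂ h₃).symm

theorem inducedActL_map (hΛ : IsNAEmbeddingTensor K brL brH ρ Λ) (h₁ h₂ h : H) :
    inducedActL brL Λ h₁ h₂ (Λ h) = Λ (descBracket brH ρ Λ h₁ h₂ h) :=
  hΛ h₁ h₂ h

theorem inducedActM_map (hΛ : IsNAEmbeddingTensor K brL brH ρ Λ) (h₁ h h₂ : H) :
    inducedActM brL ρ Λ h₁ (Λ h) h₂ = Λ (brH h₁ h h₂) := by
  rw [inducedActM, hΛ, map_add, add_sub_cancel_left]

theorem inducedActR_map (hΛ : IsNAEmbeddingTensor K brL brH ρ Λ) (h h₁ h₂ : H) :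
    inducedActR brL ρ Λ (Λ h) h₁ h₂ = Λ (brH h h₁ h₂) := by
  rw [inducedActR, hΛ, map_add, add_sub_cancel_left]

theorem inducedActL_inducedActL (hL : FundId brL) (hΛ : IsNAEmbeddingTensor K brL brH ρ Λ)
    (a₁ a₂ a₃ a₄ : H) (u : L) :
    inducedActL brL Λ a₁ a₂ (inducedActL brL Λ a₃ a₄ u)
      = inducedActL brL Λ (descBracket brH ρ Λ a₁ a₂ a₃) a₄ u
        + inducedActL brL Λ a₃ (descBracket brH ρ Λ a₁ a₂ a₄) u
        + inducedActL brL Λ a₃ a₄ (inducedActL brL Λ a₁ a₂ u) := by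
  simp only [inducedActL, map_descBracket hΛ]
  exact hL _ _ _ _ _

theorem descBracket_rho (hH : Skew brH) (hρ : IsCoherentAction K brL brH ρ)
    (a₁ a₂ : H) (x y : L) (h : H) :
    descBracket brH ρ Λ a₁ a₂ (ρ x y h)
      = ρ x y (descBracket brH ρ Λ a₁ a₂ h) + ρ (brL (Λ a₁) (Λ a₂) x) y h
        + ρ x (brL (Λ a₁) (Λ a₂) y) h := by
  rw [descBracket, descBracket, hρ.1.2.2.2 (Λ a₁) (Λ a₂) x y h, hρ.1.1.map_add₃,
    hρ.rho_brH hH]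
  abel

theorem rho_descBracket (hH : Skew brH) (hρ : IsCoherentAction K brL brH ρ)
    (x y : L) (a₁ a₂ h : H) :
    ρ x y (descBracket brH ρ Λ a₁ a₂ h)
      = descBracket brH ρ Λ a₁ a₂ (ρ x y h) + ρ (brL x y (Λ a₁)) (Λ a₂) h
        + ρ (Λ a₁) (brL x y (Λ a₂)) h := by
  rw [descBracket, descBracket, hρ.1.1.map_add₃, hρ.1.2.2.2 x y (Λ a₁) (Λ a₂) h,
    hρ.rho_brH hH]
  abel

theorem inducedActL_inducedActM (hL : Is3Leibniz K brL) (hH : Skew brH)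
    (hρ : IsCoherentAction K brL brH ρ) (hΛ : IsNAEmbeddingTensor K brL brH ρ Λ)
    (a₁ a₂ a₃ a₅ : H) (u : L) :
    inducedActL brL Λ a₁ a₂ (inducedActM brL ρ Λ a₃ u a₅)
      = inducedActM brL ρ Λ (descBracket brH ρ Λ a₁ a₂ a₃) u a₅
        + inducedActM brL ρ Λ a₃ (inducedActL brL Λ a₁ a₂ u) a₅
        + inducedActM brL ρ Λ a₃ u (descBracket brH ρ Λ a₁ a₂ a₅) := by
  rw [inducedActM, (trilinear_inducedActL hL.1).map_sub₃, inducedActL_map hΛ,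
    descBracket_rho hH hρ]
  simp only [inducedActL, inducedActM, map_descBracket hΛ, map_add]
  rw [hL.2]
  abel

theorem inducedActL_inducedActR (hL : Is3Leibniz K brL) (hH : Skew brH)
    (hρ : IsCoherentAction K brL brH ρ) (hΛ : IsNAEmbeddingTensor K brL brH ρ Λ)
    (a₁ a₂ a₄ a₅ : H) (u : L) :
    inducedActL brL Λ a₁ a₂ (inducedActR brL ρ Λ u a₄ a₅)
      = inducedActR brL ρ Λ (inducedActL brL Λ a₁ a₂ u) a₄ a₅
        + inducedActR brL ρ Λ u (descBracket brH ρ Λ a₁ a₂ a₄) a₅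
        + inducedActR brL ρ Λ u a₄ (descBracket brH ρ Λ a₁ a₂ a₅) := by
  rw [inducedActR, (trilinear_inducedActL hL.1).map_sub₃, inducedActL_map hΛ,
    descBracket_rho hH hρ]
  simp only [inducedActL, inducedActR, map_descBracket hΛ, map_add]
  rw [hL.2]
  abel

theorem inducedActM_descBracket (hL : Is3Leibniz K brL) (hH : Skew brH)
    (hρ : IsCoherentAction K brL brH ρ) (hΛ : IsNAEmbeddingTensor K brL brH ρ Λ)
    (a₁ a₃ a₄ a₅ : H) (u : L) :
    inducedActM brL ρ Λ a₁ u (descBracket brH ρ Λ a₃ a₄ a₅)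
      = inducedActR brL ρ Λ (inducedActM brL ρ Λ a₁ u a₃) a₄ a₅
        + inducedActM brL ρ Λ a₃ (inducedActM brL ρ Λ a₁ u a₄) a₅
        + inducedActL brL Λ a₃ a₄ (inducedActM brL ρ Λ a₁ u a₅) := by
  have hm : ∀ a, inducedActM brL ρ Λ a₁ u a = brL (Λ a₁) u (Λ a) - Λ (ρ (Λ a₁) u a) :=
    fun _ => rfl
  rw [hm, hm, hm, hm, (trilinear_inducedActR hL.1 hρ.1.1).map_sub₁,
    (trilinear_inducedActM hL.1 hρ.1.1).map_sub₂, (trilinear_inducedActL hL.1).map_sub₃,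
    inducedActR_map hΛ, inducedActM_map hΛ, inducedActL_map hΛ, hρ.2.2,
    hρ.brH_mid_rho_eq_zero hH]
  rw [map_descBracket hΛ, hL.2, rho_descBracket hH hρ]
  simp only [inducedActL, inducedActM, inducedActR, map_add, map_zero]
  abel

theorem inducedActR_descBracket (hL : Is3Leibniz K brL) (hH : Skew brH)
    (hρ : IsCoherentAction K brL brH ρ) (hΛ : IsNAEmbeddingTensor K brL brH ρ Λ)
    (a₂ a₃ a₄ a₅ : H) (u : L) :
    inducedActR brL ρ Λ u a₂ (descBracket brH ρ Λ a₃ a₄ a₅)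
      = inducedActR brL ρ Λ (inducedActR brL ρ Λ u a₂ a₃) a₄ a₅
        + inducedActM brL ρ Λ a₃ (inducedActR brL ρ Λ u a₂ a₄) a₅
        + inducedActL brL Λ a₃ a₄ (inducedActR brL ρ Λ u a₂ a₅) := by
  have hr : ∀ a, inducedActR brL ρ Λ u a₂ a = brL u (Λ a₂) (Λ a) - Λ (ρ u (Λ a₂) a) :=
    fun _ => rfl
  rw [hr, hr, hr, hr, (trilinear_inducedActR hL.1 hρ.1.1).map_sub₁,
    (trilinear_inducedActM hL.1 hρ.1.1).map_sub₂, (trilinear_inducedActL hL.1).map_sub₃,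
    inducedActR_map hΛ, inducedActM_map hΛ, inducedActL_map hΛ, hρ.2.2,
    hρ.brH_mid_rho_eq_zero hH]
  rw [map_descBracket hΛ, hL.2, rho_descBracket hH hρ]
  simp only [inducedActL, inducedActM, inducedActR, map_add, map_zero]
  abel

end InducedRepresentation

/-- the maps `𝔩_Λ`, `𝔪_Λ`, `𝔯_Λ` give a representation of the descendent
3-Leibniz algebra `(H, [-,-,-]_Λ)` on `L`. -/
theorem induced_representation_on_L
    {K L H : Type*} [Field K] [AddCommGroup L] [Module K L] [AddCommGroup H] [Module K H]
    (brL : L → L → L → L) (brH : H → H → H → H) (ρ : L → L → H → H)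
    (hL : Is3Lie K brL) (hH : Is3Lie K brH) (hρ : IsCoherentAction K brL brH ρ)
    (Λ : H →ₗ[K] L) (hΛ : IsNAEmbeddingTensor K brL brH ρ Λ) :
    Is3LeibnizRep K (fun h₁ h₂ h₃ => ρ (Λ h₁) (Λ h₂) h₃ + brH h₁ h₂ h₃)
      (fun h₁ h₂ l => brL (Λ h₁) (Λ h₂) l)
      (fun h₁ l h₂ => brL (Λ h₁) l (Λ h₂) - Λ (ρ (Λ h₁) l h₂))
      (fun l h₁ h₂ => brL l (Λ h₁) (Λ h₂) - Λ (ρ l (Λ h₁) h₂)) := by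
  have hLeib : Is3Leibniz K brL := ⟨hL.1, hL.2.2⟩
  exact ⟨trilinear_inducedActL hL.1, trilinear_inducedActM hL.1 hρ.1.1,
    trilinear_inducedActR hL.1 hρ.1.1, inducedActL_inducedActL hL.2.2 hΛ,
    inducedActL_inducedActM hLeib hH.2.1 hρ hΛ, inducedActL_inducedActR hLeib hH.2.1 hρ hΛ,
    inducedActM_descBracket hLeib hH.2.1 hρ hΛ, inducedActR_descBracket hLeib hH.2.1 hρ hΛ⟩
end

section
/- Let $(L,[-,-]_L)$ be a Lie algebra and $\varsigma\in L^*$ a trace map, i.e. $\varsigma([l_1,l_2]_L)=0$ for all $l_1,l_2$. Then the ternary bracket $[l_1,l_2,l_3]_{L_\varsigma}=\varsigma(l_1)[l_2,l_3]_L+\varsigma(l_2)[l_3,l_1]_L+\varsigma(l_3)[l_1,l_2]_L$ makes $L$ into a 3-Lie algebra. -/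
/-!
Fix `a, b` and put `u = ς(a) b - ς(b) a`, `w = [a, b]`. Then
`[a, b, x] = [u, x] + ς(x) w`, and the fundamental identity says that this map is a derivation
of the ternary bracket. Both summands are: `ad u` because it is a derivation of the Lie bracket
and `ς ∘ ad u = 0`, and `x ↦ ς(x) w` because `ς` kills the ternary bracket and `ς(w) = 0`,
which makes the six terms of its right-hand side cancel in pairs.
-/

def IsTernaryDerivation {V : Type*} [AddCommGroup V] (f : V → V → V → V) (D : V → V) : Prop :=
  ∀ c d e, D (f c d e) = f (D c) d e + f c (D d) e + f c d (D e)

theorem fundId_iff_forall_isTernaryDerivation {V : Type*} [AddCommGroup V]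
    (f : V → V → V → V) : FundId f ↔ ∀ a b, IsTernaryDerivation f (f a b) :=
  Iff.rfl

section TraceBracket

variable {R L : Type*} [CommRing R] [LieRing L] [LieAlgebra R L] (ς : L →ₗ[R] R)

def traceBracket (a b c : L) : L :=
  ς a • ⁅b, c⁆ + ς b • ⁅c, a⁆ + ς c • ⁅a, b⁆

theorem traceBracket_swap_left (a b c : L) :
    traceBracket ς a b c = -traceBracket ς b a c := by
  simp only [traceBracket, ← lie_skew a c, ← lie_skew c b, ← lie_skew b a, smul_neg]
  abel

theorem traceBracket_swap_right (a b c : L) :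
    traceBracket ς a b c = -traceBracket ς a c b := by
  simp only [traceBracket, ← lie_skew c a, ← lie_skew b c, ← lie_skew a b, smul_neg]
  abel

theorem traceBracket_add_left (x y b c : L) :
    traceBracket ς (x + y) b c = traceBracket ς x b c + traceBracket ς y b c := by
  simp only [traceBracket, map_add, lie_add, add_lie, add_smul, smul_add]
  abel

theorem traceBracket_add_middle (a x y c : L) :
    traceBracket ς a (x + y) c = traceBracket ς a x c + traceBracket ς a y c := by
  simp only [traceBracket, map_add, lie_add, add_lie, add_smul, smul_add]
  abel

theorem traceBracket_add_right (a b x y : L) :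
    traceBracket ς a b (x + y) = traceBracket ς a b x + traceBracket ς a b y := by
  simp only [traceBracket, map_add, lie_add, add_lie, add_smul, smul_add]
  abel

theorem traceBracket_smul_left (r : R) (a b c : L) :
    traceBracket ς (r • a) b c = r • traceBracket ς a b c := by
  simp only [traceBracket, map_smul, smul_eq_mul, lie_smul, smul_lie]
  module

theorem traceBracket_smul_middle (r : R) (a b c : L) :
    traceBracket ς a (r • b) c = r • traceBracket ς a b c := by
  simp only [traceBracket, map_smul, smul_eq_mul, lie_smul, smul_lie]
  module

theorem traceBracket_smul_right (r : R) (a b c : L) :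
    traceBracket ς a b (r • c) = r • traceBracket ς a b c := by
  simp only [traceBracket, map_smul, smul_eq_mul, lie_smul, smul_lie]
  module

theorem traceBracket_trilinear {K : Type*} [Field K] [LieAlgebra K L] (ς : L →ₗ[K] K) :
    Trilinear K (traceBracket ς) :=
  ⟨traceBracket_add_left ς, traceBracket_smul_left ς, traceBracket_add_middle ς,
    traceBracket_smul_middle ς, traceBracket_add_right ς, traceBracket_smul_right ς⟩

theorem traceBracket_eq_lie_add_smul (a b x : L) :
    traceBracket ς a b x = ⁅ς a • b - ς b • a, x⁆ + ς x • ⁅a, b⁆ := by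
  simp only [traceBracket, sub_lie, smul_lie, ← lie_skew x a]
  module

theorem isTernaryDerivation_traceBracket_add {D₁ D₂ : L → L}
    (h₁ : IsTernaryDerivation (traceBracket ς) D₁) (h₂ : IsTernaryDerivation (traceBracket ς) D₂) :
    IsTernaryDerivation (traceBracket ς) (D₁ + D₂) := by
  intro c d e
  simp only [Pi.add_apply, traceBracket_add_left, traceBracket_add_middle,
    traceBracket_add_right, h₁ c d e, h₂ c d e]
  abel

theorem trace_traceBracket (hς : ∀ a b : L, ς ⁅a, b⁆ = 0) (a b c : L) :
    ς (traceBracket ς a b c) = 0 := by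
  simp [traceBracket, hς]

theorem isTernaryDerivation_lie (hς : ∀ a b : L, ς ⁅a, b⁆ = 0) (u : L) :
    IsTernaryDerivation (traceBracket ς) (fun x => ⁅u, x⁆) := by
  intro c d e
  simp only [traceBracket, lie_add, lie_smul, hς, zero_smul, zero_add, lie_lie]
  module

theorem isTernaryDerivation_smul_of_trace_eq_zero (hς : ∀ a b : L, ς ⁅a, b⁆ = 0) {w : L}
    (hw : ς w = 0) :
    IsTernaryDerivation (traceBracket ς) (fun x => ς x • w) := by
  intro c d e
  dsimp only
  rw [trace_traceBracket ς hς, zero_smul, traceBracket_smul_left, traceBracket_smul_middle,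
    traceBracket_smul_right]
  simp only [traceBracket, hw, zero_smul, zero_add, add_zero, ← lie_skew w c, ← lie_skew w d,
    ← lie_skew w e]
  module

theorem fundId_traceBracket (hς : ∀ a b : L, ς ⁅a, b⁆ = 0) : FundId (traceBracket ς) := by
  refine (fundId_iff_forall_isTernaryDerivation _).2 fun a b => ?_
  have hsplit : traceBracket ς a b = (fun x => ⁅ς a • b - ς b • a, x⁆) + fun x => ς x • ⁅a, b⁆ :=
    funext (traceBracket_eq_lie_add_smul ς a b)
  rw [hsplit]
  exact isTernaryDerivation_traceBracket_add ς (isTernaryDerivation_lie ς hς _)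
    (isTernaryDerivation_smul_of_trace_eq_zero ς hς (hς a b))

end TraceBracket

/-- a Lie algebra with a trace map `ς` gives a 3-Lie algebra via
`[l₁,l₂,l₃] = ς(l₁)[l₂,l₃] + ς(l₂)[l₃,l₁] + ς(l₃)[l₁,l₂]`. -/
theorem lie_trace_gives_3Lie
    {K L : Type*} [Field K] [LieRing L] [LieAlgebra K L]
    (ς : L →ₗ[K] K) (hς : ∀ a b : L, ς ⁅a, b⁆ = 0) :
    Is3Lie K (fun a b c : L => ς a • ⁅b, c⁆ + ς b • ⁅c, a⁆ + ς c • ⁅a, b⁆) :=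
  ⟨traceBracket_trilinear ς, ⟨traceBracket_swap_left ς, traceBracket_swap_right ς⟩,
    fundId_traceBracket ς hς⟩
end
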